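/- arXiv:2605.05601 — 2 statements merged into one kernel-verified Lean document; each statement's English description precedes it below -/
import Mathlib

section
/- In a delta-matroid D, every feasible set X is sandwiched between a minimum and a maximum feasible set: there exist A ∈ F_min(D) and B ∈ F_max(D) with A ⊆ X ⊆ B. -/
/-- The Symmetric Exchange Axiom for a set system. -/
def SEA {α : Type*} [DecidableEq α] (𝓕 : Finset (Finset α)) : Prop :=
  ∀ X ∈ 𝓕, ∀ Y ∈ 𝓕, ∀ u ∈ symmDiff X Y, ∃ v ∈ symmDiff X Y,
    symmDiff X ({u, v} : Finset α) ∈ 𝓕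

/-- Minimum cardinality of a feasible set. -/
noncomputable def rmin {α : Type*} (𝓕 : Finset (Finset α)) : ℕ :=
  sInf {n | ∃ F ∈ 𝓕, F.card = n}

/-- Maximum cardinality of a feasible set. -/
def rmax {α : Type*} (𝓕 : Finset (Finset α)) : ℕ := 𝓕.sup Finset.card

/-!
Among the minimum feasible sets pick `A` with `A ∆ X` as small as possible. If some `u ∈ A`
lies outside `X`, the exchange axiom for `A, X, u` yields `v ∈ A ∆ X` with `A ∆ {u, v}`
feasible. Either `v ∈ A`, and `A ∆ {u, v} = A \ {u, v}` is a smaller feasible set, or `v ∉ A`,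
and `A ∆ {u, v}` is again a minimum feasible set, now strictly closer to `X`. Both contradict
the choice of `A`, so `A ⊆ X`. The maximum feasible set is found in the same way.
-/

open scoped symmDiff

namespace Finset

variable {α : Type*} [DecidableEq α] {X Y s : Finset α} {u v : α}

theorem symmDiff_pair_of_mem_of_notMem (hu : u ∈ Y) (hv : v ∉ Y) :
    Y ∆ {u, v} = insert v (Y.erase u) := by
  ext a
  by_cases hau : a = u <;> by_cases hav : a = v <;> simp_all [mem_symmDiff]

theorem card_symmDiff_pair_of_mem_of_notMem (hu : u ∈ Y) (hv : v ∉ Y) :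
    (Y ∆ {u, v}).card = Y.card := by
  rw [symmDiff_pair_of_mem_of_notMem hu hv,
    card_insert_of_notMem fun h => hv (mem_of_mem_erase h), card_erase_add_one hu]

theorem card_symmDiff_lt_of_subset (h : s ⊆ Y) (hs : s.Nonempty) : (Y ∆ s).card < Y.card := by
  rw [symmDiff_of_ge h]
  exact card_lt_card (sdiff_ssubset h hs)

theorem card_lt_card_symmDiff_of_disjoint (h : Disjoint Y s) (hs : s.Nonempty) :
    Y.card < (Y ∆ s).card := by
  rw [h.symmDiff_eq_sup, sup_eq_union, card_union_of_disjoint h]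
  exact Nat.lt_add_of_pos_right hs.card_pos

theorem card_symmDiff_symmDiff_lt (h : s ⊆ Y ∆ X) (hs : s.Nonempty) :
    (Y ∆ s ∆ X).card < (Y ∆ X).card := by
  rw [symmDiff_right_comm]
  exact card_symmDiff_lt_of_subset h hs

end Finset

section

variable {α : Type*} {𝓕 : Finset (Finset α)} {X Y : Finset α}

theorem rmin_le_card (hY : Y ∈ 𝓕) : rmin 𝓕 ≤ Y.card :=
  Nat.sInf_le ⟨Y, hY, rfl⟩

theorem card_le_rmax (hY : Y ∈ 𝓕) : Y.card ≤ rmax 𝓕 :=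
  Finset.le_sup hY

theorem exists_card_eq_rmin (hX : X ∈ 𝓕) : ∃ A ∈ 𝓕, A.card = rmin 𝓕 :=
  Nat.sInf_mem (s := {n | ∃ F ∈ 𝓕, F.card = n}) ⟨X.card, X, hX, rfl⟩

theorem exists_card_eq_rmax (hX : X ∈ 𝓕) : ∃ B ∈ 𝓕, B.card = rmax 𝓕 := by
  obtain ⟨B, hB, h⟩ := 𝓕.exists_mem_eq_sup ⟨X, hX⟩ Finset.card
  exact ⟨B, hB, h.symm⟩

end

namespace SEA

open Finset

variable {α : Type*} [DecidableEq α] {𝓕 : Finset (Finset α)} {X : Finset α}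

theorem exists_card_eq_rmin_subset (hSEA : SEA 𝓕) (hX : X ∈ 𝓕) :
    ∃ A ∈ 𝓕, A.card = rmin 𝓕 ∧ A ⊆ X := by
  obtain ⟨A, hA, hAclosest⟩ :=
    (𝓕.filter (·.card = rmin 𝓕)).exists_min_image (fun A => (A ∆ X).card) <| by
      obtain ⟨A, hA, hAc⟩ := exists_card_eq_rmin hX
      exact ⟨A, mem_filter.2 ⟨hA, hAc⟩⟩
  obtain ⟨hA, hAc⟩ := mem_filter.1 hA
  refine ⟨A, hA, hAc, fun u huA => by_contra fun huX => ?_⟩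
  have hu : u ∈ A ∆ X := mem_symmDiff.2 (Or.inl ⟨huA, huX⟩)
  obtain ⟨v, hv, hA'⟩ := hSEA A hA X hX u hu
  by_cases hvA : v ∈ A
  · have := card_symmDiff_lt_of_subset (insert_subset huA (singleton_subset_iff.2 hvA))
      (insert_nonempty u {v})
    have := rmin_le_card hA'
    omega
  · have hcard : (A ∆ {u, v}).card = rmin 𝓕 := by
      rw [card_symmDiff_pair_of_mem_of_notMem huA hvA, hAc]
    have := hAclosest _ (mem_filter.2 ⟨hA', hcard⟩)
    have := card_symmDiff_symmDiff_lt (insert_subset hu (singleton_subset_iff.2 hv))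
      (insert_nonempty u {v})
    omega

theorem exists_card_eq_rmax_superset (hSEA : SEA 𝓕) (hX : X ∈ 𝓕) :
    ∃ B ∈ 𝓕, B.card = rmax 𝓕 ∧ X ⊆ B := by
  obtain ⟨B, hB, hBclosest⟩ :=
    (𝓕.filter (·.card = rmax 𝓕)).exists_min_image (fun B => (B ∆ X).card) <| by
      obtain ⟨B, hB, hBc⟩ := exists_card_eq_rmax hX
      exact ⟨B, mem_filter.2 ⟨hB, hBc⟩⟩
  obtain ⟨hB, hBc⟩ := mem_filter.1 hB
  refine ⟨B, hB, hBc, fun u huX => by_contra fun huB => ?_⟩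
  have hu : u ∈ B ∆ X := mem_symmDiff.2 (Or.inr ⟨huX, huB⟩)
  obtain ⟨v, hv, hB'⟩ := hSEA B hB X hX u hu
  by_cases hvB : v ∈ B
  · have hcard : (B ∆ {u, v}).card = rmax 𝓕 := by
      rw [pair_comm, card_symmDiff_pair_of_mem_of_notMem hvB huB, hBc]
    have := hBclosest _ (mem_filter.2 ⟨hB', hcard⟩)
    have := card_symmDiff_symmDiff_lt (insert_subset hu (singleton_subset_iff.2 hv))
      (insert_nonempty u {v})
    omega
  · have := card_lt_card_symmDiff_of_disjoint
      (disjoint_insert_right.2 ⟨huB, disjoint_singleton_right.2 hvB⟩) (insert_nonempty u {v})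
    have := card_le_rmax hB'
    omega

end SEA

theorem feasible_sandwich_general {α : Type*} [DecidableEq α] (𝓕 : Finset (Finset α))
    (hSEA : SEA 𝓕) (X : Finset α) (hX : X ∈ 𝓕) :
    ∃ A ∈ 𝓕, ∃ B ∈ 𝓕, A.card = rmin 𝓕 ∧ B.card = rmax 𝓕 ∧ A ⊆ X ∧ X ⊆ B := by
  obtain ⟨A, hA, hAc, hAX⟩ := hSEA.exists_card_eq_rmin_subset hX
  obtain ⟨B, hB, hBc, hXB⟩ := hSEA.exists_card_eq_rmax_superset hX
  exact ⟨A, hA, B, hB, hAc, hBc, hAX, hXB⟩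

/-- Every feasible set of a delta-matroid is sandwiched between a minimum
and a maximum feasible set. -/
theorem feasible_sandwich {α : Type*} [DecidableEq α] (𝓕 : Finset (Finset α))
    (hne : 𝓕.Nonempty) (hSEA : SEA 𝓕) (X : Finset α) (hX : X ∈ 𝓕) :
    ∃ A ∈ 𝓕, ∃ B ∈ 𝓕, A.card = rmin 𝓕 ∧ B.card = rmax 𝓕 ∧ A ⊆ X ∧ X ⊆ B :=
  feasible_sandwich_general 𝓕 hSEA X hX
end

section
/- If e has primal type t in a delta-matroid D (i.e., e is a non-orientable ribbon loop), then the minimum-cardinality feasible sets of D * e coincide with those of D: F_min(D * e) = F_min(D). -/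
/-- The twist of a set system with respect to a subset `A`. -/
def twistSys {α : Type*} [DecidableEq α] (𝓕 : Finset (Finset α)) (A : Finset α) :
    Finset (Finset α) :=
  𝓕.image (fun X => symmDiff A X)

/-!
Adding `e` to a minimum feasible set `G` gives a feasible set: among the feasible sets of size
`rmin + 1` containing `e`, take `F` with `F \ G` smallest. If `F ⊄ insert e G`, the exchange axiom
applied to `F`, `G` and some `u ∈ F \ G` other than `e` removes `u` and, since nothing of size
`rmin - 1` is feasible, either adds nothing (a minimum feasible set containing `e`) or adds an
element of `G` (a feasible set closer to `G`). Hence every minimum feasible set `X` of `𝓕` equals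
`{e} ∆ insert e X`, a set of `𝓕 * e`, whose minimum size is still `rmin 𝓕`. The element `e` has
type `t` in `𝓕 * e` as well, and twisting by `{e}` is an involution, so the reverse inclusion is
the same statement for `𝓕 * e`.
-/

namespace Finset

variable {α : Type*} [DecidableEq α] {e : α} {F : Finset α}

theorem singleton_symmDiff_of_mem (h : e ∈ F) : symmDiff {e} F = F.erase e := by
  rw [symmDiff_of_le (singleton_subset_iff.2 h), sdiff_singleton_eq_erase]

theorem singleton_symmDiff_of_notMem (h : e ∉ F) : symmDiff {e} F = insert e F := by
  rw [(disjoint_singleton_left.2 h).symmDiff_eq_sup, insert_eq, sup_eq_union]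

end Finset

open Finset

section SetSystem

variable {α : Type*} {𝓕 : Finset (Finset α)}

noncomputable def minSets (𝓕 : Finset (Finset α)) : Finset (Finset α) :=
  {F ∈ 𝓕 | F.card = rmin 𝓕}

theorem rmin_le_card_s10 {F : Finset α} (hF : F ∈ 𝓕) : rmin 𝓕 ≤ F.card :=
  Nat.sInf_le ⟨F, hF, rfl⟩

theorem exists_card_eq_rmin_s10 (hne : 𝓕.Nonempty) : ∃ F ∈ 𝓕, F.card = rmin 𝓕 := by
  obtain ⟨F, hF⟩ := hne
  exact Nat.sInf_mem (s := {n | ∃ F ∈ 𝓕, F.card = n}) ⟨F.card, F, hF, rfl⟩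

variable [DecidableEq α]

theorem mem_twistSys {A X : Finset α} : X ∈ twistSys 𝓕 A ↔ ∃ F ∈ 𝓕, symmDiff A F = X :=
  mem_image

theorem symmDiff_mem_twistSys {A F : Finset α} (hF : F ∈ 𝓕) : symmDiff A F ∈ twistSys 𝓕 A :=
  mem_image_of_mem _ hF

theorem twistSys_twistSys (A : Finset α) : twistSys (twistSys 𝓕 A) A = 𝓕 := by
  simp [twistSys, image_image, Function.comp_def, symmDiff_symmDiff_cancel_left]

theorem SEA.twistSys (h : SEA 𝓕) (A : Finset α) : SEA (twistSys 𝓕 A) := by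
  intro _ hX' _ hY' u hu
  obtain ⟨X, hX, rfl⟩ := mem_twistSys.1 hX'
  obtain ⟨Y, hY, rfl⟩ := mem_twistSys.1 hY'
  rw [symmDiff_symmDiff_symmDiff_comm, symmDiff_self, bot_symmDiff] at hu ⊢
  obtain ⟨v, hv, hmem⟩ := h X hX Y hY u hu
  exact ⟨v, hv, symmDiff_assoc A X {u, v} ▸ symmDiff_mem_twistSys hmem⟩

theorem SEA.erase_mem_or_exists_insert_erase_mem (h : SEA 𝓕) {F G : Finset α} (hF : F ∈ 𝓕)
    (hG : G ∈ 𝓕) (hFc : F.card = rmin 𝓕 + 1) {u : α} (huF : u ∈ F) (huG : u ∉ G) :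
    F.erase u ∈ 𝓕 ∨ ∃ v ∈ G, v ∉ F ∧ insert v (F.erase u) ∈ 𝓕 := by
  obtain ⟨v, hv, hmem⟩ := h F hF G hG u (mem_symmDiff.2 (Or.inl ⟨huF, huG⟩))
  rcases mem_symmDiff.1 hv with ⟨hvF, -⟩ | ⟨hvG, hvF⟩
  · by_cases hvu : v = u
    · subst hvu
      left
      convert hmem using 1
      ext a
      simp only [mem_erase, mem_symmDiff, mem_insert, mem_singleton, or_self]
      grind
    · exfalso
      have hZ : symmDiff F {u, v} = (F.erase u).erase v := by
        ext a
        simp only [mem_erase, mem_symmDiff, mem_insert, mem_singleton]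
        grind
      have hcard := hZ ▸ rmin_le_card_s10 hmem
      have := card_erase_add_one huF
      have := card_erase_add_one (mem_erase.2 ⟨hvu, hvF⟩)
      omega
  · right
    refine ⟨v, hvG, hvF, ?_⟩
    convert hmem using 1
    ext a
    simp only [mem_erase, mem_symmDiff, mem_insert, mem_singleton]
    grind

end SetSystem

def IsTypeTLoop {α : Type*} (𝓕 : Finset (Finset α)) (e : α) : Prop :=
  (∀ F ∈ 𝓕, F.card = rmin 𝓕 → e ∉ F) ∧ ∃ F ∈ 𝓕, F.card = rmin 𝓕 + 1 ∧ e ∈ F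

namespace IsTypeTLoop

variable {α : Type*} [DecidableEq α] {𝓕 : Finset (Finset α)} {e : α}

theorem insert_mem (ht : IsTypeTLoop 𝓕 e) (h : SEA 𝓕) {G : Finset α} (hG : G ∈ 𝓕)
    (hGc : G.card = rmin 𝓕) : insert e G ∈ 𝓕 := by
  obtain ⟨hmin, F, hF, hFc, heF⟩ := ht
  have heG := hmin G hG hGc
  induction hd : (F \ G).card using Nat.strong_induction_on generalizing F with
  | _ n ih =>
    by_cases hsub : F ⊆ insert e G
    · have hcard : (insert e G).card ≤ F.card := by rw [card_insert_of_notMem heG]; omega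
      exact eq_of_subset_of_card_le hsub hcard ▸ hF
    obtain ⟨u, huF, hu⟩ := not_subset.1 hsub
    obtain ⟨hue, huG⟩ := not_or.1 (mem_insert.not.1 hu)
    have heFu : e ∈ F.erase u := mem_erase.2 ⟨Ne.symm hue, heF⟩
    rcases h.erase_mem_or_exists_insert_erase_mem hF hG hFc huF huG with
      hmem | ⟨v, hvG, hvF, hmem⟩
    · exact absurd heFu (hmin _ hmem (by rw [card_erase_of_mem huF]; omega))
    · have hsdiff : insert v (F.erase u) \ G = (F \ G).erase u := by
        rw [insert_sdiff_of_mem _ hvG, erase_sdiff_comm]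
      refine ih _ ?_ _ hmem ?_ (mem_insert_of_mem heFu) rfl
      · rw [← hd, hsdiff]
        exact card_lt_card (erase_ssubset (mem_sdiff.2 ⟨huF, huG⟩))
      · rw [card_insert_of_notMem (fun h => hvF (mem_of_mem_erase h)), card_erase_of_mem huF]
        omega

theorem rmin_le_card_singleton_symmDiff (ht : IsTypeTLoop 𝓕 e) {F : Finset α} (hF : F ∈ 𝓕) :
    rmin 𝓕 ≤ (symmDiff {e} F).card := by
  have hle := rmin_le_card_s10 hF
  by_cases heF : e ∈ F
  · have hne : F.card ≠ rmin 𝓕 := fun h => ht.1 F hF h heF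
    rw [singleton_symmDiff_of_mem heF, card_erase_of_mem heF]
    omega
  · rw [singleton_symmDiff_of_notMem heF, card_insert_of_notMem heF]
    omega

theorem rmin_twistSys (ht : IsTypeTLoop 𝓕 e) : rmin (twistSys 𝓕 {e}) = rmin 𝓕 := by
  obtain ⟨F, hF, hFc, heF⟩ := ht.2
  have hmem := symmDiff_mem_twistSys (A := {e}) hF
  have hcard : (symmDiff {e} F).card = rmin 𝓕 := by
    rw [singleton_symmDiff_of_mem heF, card_erase_of_mem heF, hFc, Nat.add_sub_cancel]
  refine le_antisymm (hcard ▸ rmin_le_card_s10 hmem) ?_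
  obtain ⟨X, hX, hXc⟩ := exists_card_eq_rmin_s10 ⟨_, hmem⟩
  obtain ⟨F', hF', rfl⟩ := mem_twistSys.1 hX
  exact hXc ▸ ht.rmin_le_card_singleton_symmDiff hF'

theorem twistSys_singleton (ht : IsTypeTLoop 𝓕 e) (hne : 𝓕.Nonempty) :
    IsTypeTLoop (twistSys 𝓕 {e}) e := by
  rw [IsTypeTLoop, ht.rmin_twistSys]
  constructor
  · rintro _ hX hXc heX
    obtain ⟨F, hF, rfl⟩ := mem_twistSys.1 hX
    by_cases heF : e ∈ F
    · rw [singleton_symmDiff_of_mem heF] at heX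
      exact (notMem_erase e F) heX
    · rw [singleton_symmDiff_of_notMem heF, card_insert_of_notMem heF] at hXc
      have := rmin_le_card_s10 hF
      omega
  · obtain ⟨G, hG, hGc⟩ := exists_card_eq_rmin_s10 hne
    have heG := ht.1 G hG hGc
    refine ⟨_, symmDiff_mem_twistSys hG, ?_, ?_⟩ <;> rw [singleton_symmDiff_of_notMem heG]
    · rw [card_insert_of_notMem heG, hGc]
    · exact mem_insert_self e G

theorem minSets_subset_minSets_twistSys (ht : IsTypeTLoop 𝓕 e) (h : SEA 𝓕) :
    minSets 𝓕 ⊆ minSets (twistSys 𝓕 {e}) := by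
  intro X hX
  obtain ⟨hX, hXc⟩ := mem_filter.1 hX
  refine mem_filter.2 ⟨?_, by rw [hXc, ht.rmin_twistSys]⟩
  have hmem := symmDiff_mem_twistSys (A := {e}) (ht.insert_mem h hX hXc)
  rwa [singleton_symmDiff_of_mem (mem_insert_self e X), erase_insert (ht.1 X hX hXc)] at hmem

end IsTypeTLoop

/-- If `e` has primal type `t` in a delta-matroid `D`, then the minimum-cardinality
feasible sets of `D * e` coincide with those of `D`. -/
theorem typeT_min_twist {α : Type*} [DecidableEq α] (𝓕 : Finset (Finset α))
    (hne : 𝓕.Nonempty) (hSEA : SEA 𝓕) (e : α)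
    (h1 : ∀ F ∈ 𝓕, F.card = rmin 𝓕 → e ∉ F)
    (h2 : ∃ F ∈ 𝓕, F.card = rmin 𝓕 + 1 ∧ e ∈ F) :
    {F ∈ twistSys 𝓕 {e} | F.card = rmin (twistSys 𝓕 {e})} =
      {F ∈ 𝓕 | F.card = rmin 𝓕} := by
  have ht : IsTypeTLoop 𝓕 e := ⟨h1, h2⟩
  have hback := (ht.twistSys_singleton hne).minSets_subset_minSets_twistSys (hSEA.twistSys {e})
  rw [twistSys_twistSys] at hback
  exact subset_antisymm hback (ht.minSets_subset_minSets_twistSys hSEA)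
end
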